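/- arXiv:math/0311080 — 4 statements merged into one kernel-verified Lean document; each statement's English description precedes it below -/
import Mathlib

section
/- Let P be a morphism V_m ⇉ V_n and Q be a morphism V_n ⇉ V_k (in the sense of Lagrangian linear relations on which the Hermitian form is positive definite). Then the product linear relation QP is a morphism V_m ⇉ V_k; that is, QP is a complex subspace of V_m ⊕ V_k of dimension m+k on which L_{m,k} vanishes identically and on which H_{m,k} is strictly positive definite. -/
noncomputable section

/-- `V_n = ℂⁿ ⊕ ℂⁿ`, with coordinates `(v⁺, v⁻)`. -/
abbrev Vsp (n : ℕ) := (Fin n → ℂ) × (Fin n → ℂ)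

/-- The skew-symmetric bilinear form
`L_n((v⁺,v⁻),(w⁺,w⁻)) = Σ_j (v⁺_j w⁻_j − v⁻_j w⁺_j)`. -/
def Lf {n : ℕ} (v w : Vsp n) : ℂ := ∑ j, (v.1 j * w.2 j - v.2 j * w.1 j)

/-- The Hermitian form
`H_n((v⁺,v⁻),(w⁺,w⁻)) = (1/i) Σ_j (v⁺_j conj(w⁻_j) − v⁻_j conj(w⁺_j))`. -/
def Hf {n : ℕ} (v w : Vsp n) : ℂ :=
  (1 / Complex.I) * ∑ j, (v.1 j * (starRingEnd ℂ) (w.2 j) - v.2 j * (starRingEnd ℂ) (w.1 j))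

/-- `L_{m,n}((v,w),(v′,w′)) = L_m(v,v′) − L_n(w,w′)` on `V_m ⊕ V_n`. -/
def Lmn {m n : ℕ} (v w : Vsp m × Vsp n) : ℂ := Lf v.1 w.1 - Lf v.2 w.2

/-- `H_{m,n}((v,w),(v′,w′)) = H_m(v,v′) − H_n(w,w′)` on `V_m ⊕ V_n`. -/
def Hmn {m n : ℕ} (v w : Vsp m × Vsp n) : ℂ := Hf v.1 w.1 - Hf v.2 w.2

/-- A morphism `V_m ⇉ V_n`: a complex subspace `P ⊆ V_m ⊕ V_n` of dimension `m+n`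
on which `L_{m,n}` vanishes identically and `H_{m,n}` is strictly positive definite. -/
def IsMorphism {m n : ℕ} (P : Submodule ℂ (Vsp m × Vsp n)) : Prop :=
  Module.finrank ℂ P = m + n ∧
  (∀ p ∈ P, ∀ q ∈ P, Lmn p q = 0) ∧
  (∀ p ∈ P, p ≠ 0 → 0 < (Hmn p p).re)

/-- The product (composition) of linear relations:
`QP = {(v, y) : ∃ w, (v, w) ∈ P ∧ (w, y) ∈ Q}`. -/
def relComp {α β γ : Type*} [AddCommGroup α] [Module ℂ α] [AddCommGroup β] [Module ℂ β]
    [AddCommGroup γ] [Module ℂ γ]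
    (P : Submodule ℂ (α × β)) (Q : Submodule ℂ (β × γ)) : Submodule ℂ (α × γ) where
  carrier := {x | ∃ w : β, (x.1, w) ∈ P ∧ (w, x.2) ∈ Q}
  add_mem' := by
    rintro ⟨a, c⟩ ⟨a', c'⟩ ⟨w, hP, hQ⟩ ⟨w', hP', hQ'⟩
    exact ⟨w + w', P.add_mem hP hP', Q.add_mem hQ hQ'⟩
  zero_mem' := ⟨0, P.zero_mem, Q.zero_mem⟩
  smul_mem' := by
    rintro c ⟨a, b⟩ ⟨w, hP, hQ⟩
    exact ⟨c • w, P.smul_mem c hP, Q.smul_mem c hQ⟩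

/- ### Auxiliary lemmas -/

lemma Hf_zero {n : ℕ} : Hf (0 : Vsp n) 0 = 0 := by simp [Hf]

lemma Hf_I_self {n : ℕ} (a : Fin n → ℂ) :
    (Hf ((a, fun j => Complex.I * a j) : Vsp n) (a, fun j => Complex.I * a j)).re
      = -2 * ∑ j, Complex.normSq (a j) := by
  have h : Hf ((a, fun j => Complex.I * a j) : Vsp n) (a, fun j => Complex.I * a j)
      = ((-2 * ∑ j, Complex.normSq (a j) : ℝ) : ℂ) := by
    unfold Hf
    have h2 : ∀ j ∈ Finset.univ, a j * (starRingEnd ℂ) (Complex.I * a j)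
        - Complex.I * a j * (starRingEnd ℂ) (a j)
        = -2 * Complex.I * ((Complex.normSq (a j) : ℝ) : ℂ) := by
      intro j _
      rw [map_mul, Complex.conj_I, ← Complex.mul_conj]
      ring
    rw [Finset.sum_congr rfl h2, ← Finset.mul_sum]
    push_cast
    have hI := Complex.I_ne_zero
    field_simp
  rw [h, Complex.ofReal_re]

lemma Hf_negI_self {n : ℕ} (b : Fin n → ℂ) :
    (Hf ((b, fun j => -Complex.I * b j) : Vsp n) (b, fun j => -Complex.I * b j)).re
      = 2 * ∑ j, Complex.normSq (b j) := by
  have h : Hf ((b, fun j => -Complex.I * b j) : Vsp n) (b, fun j => -Complex.I * b j)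
      = ((2 * ∑ j, Complex.normSq (b j) : ℝ) : ℂ) := by
    unfold Hf
    have h2 : ∀ j ∈ Finset.univ, b j * (starRingEnd ℂ) (-Complex.I * b j)
        - (-Complex.I) * b j * (starRingEnd ℂ) (b j)
        = 2 * Complex.I * ((Complex.normSq (b j) : ℝ) : ℂ) := by
      intro j _
      rw [map_mul, map_neg, Complex.conj_I, ← Complex.mul_conj]
      ring
    rw [Finset.sum_congr rfl h2, ← Finset.mul_sum]
    push_cast
    have hI := Complex.I_ne_zero
    field_simp
  rw [h, Complex.ofReal_re]

lemma Lmn_split {m n k : ℕ} (v v' : Vsp m) (w w' : Vsp n) (y y' : Vsp k) :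
    Lmn (v, y) (v', y') = Lmn (v, w) (v', w') + Lmn (w, y) (w', y') := by
  simp only [Lmn]; ring

lemma Hmn_split {m n k : ℕ} (v v' : Vsp m) (w w' : Vsp n) (y y' : Vsp k) :
    Hmn (v, y) (v', y') = Hmn (v, w) (v', w') + Hmn (w, y) (w', y') := by
  simp only [Hmn]; ring

section DimLemmas

set_option synthInstance.maxHeartbeats 1000000
set_option maxHeartbeats 1000000

variable {m n k : ℕ}

/-- The "difference of middle coordinates" map on the ambient space. -/
def Gmap (m n k : ℕ) : ((Vsp m × Vsp n) × (Vsp n × Vsp k)) →ₗ[ℂ] Vsp n where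
  toFun x := x.1.2 - x.2.1
  map_add' x y := add_sub_add_comm _ _ _ _
  map_smul' c x := (smul_sub c _ _).symm

/-- The "outer coordinates" map on the ambient space. -/
def Fmap (m n k : ℕ) : ((Vsp m × Vsp n) × (Vsp n × Vsp k)) →ₗ[ℂ] (Vsp m × Vsp k) where
  toFun x := (x.1.1, x.2.2)
  map_add' x y := rfl
  map_smul' c x := rfl

/-- The reference negative subspace embedding. -/
def phimap (m k : ℕ) : ((Fin m → ℂ) × (Fin k → ℂ)) →ₗ[ℂ] (Vsp m × Vsp k) where
  toFun x := ((x.1, fun j => Complex.I * x.1 j), (x.2, fun j => -Complex.I * x.2 j))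
  map_add' x y :=
    Prod.ext (Prod.ext rfl (funext fun j => mul_add _ _ _))
      (Prod.ext rfl (funext fun j => mul_add _ _ _))
  map_smul' c x :=
    Prod.ext (Prod.ext rfl (funext fun j => mul_left_comm _ _ _))
      (Prod.ext rfl (funext fun j => mul_left_comm _ _ _))

variable (P : Submodule ℂ (Vsp m × Vsp n)) (Q : Submodule ℂ (Vsp n × Vsp k))

/-- The fibre product of `P` and `Q` over `V_n`, inside the ambient space. -/
def Tsub : Submodule ℂ ((Vsp m × Vsp n) × (Vsp n × Vsp k)) :=
  (P.prod Q) ⊓ LinearMap.ker (Gmap m n k)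

lemma relComp_eq_map : relComp P Q = Submodule.map (Fmap m n k) (Tsub P Q) := by
  ext ⟨v, y⟩
  constructor
  · rintro ⟨w, h1, h2⟩
    refine ⟨((v, w), (w, y)), Submodule.mem_inf.mpr ⟨Submodule.mem_prod.mpr ⟨h1, h2⟩,
      LinearMap.mem_ker.mpr (sub_self w)⟩, rfl⟩
  · rintro ⟨⟨⟨v', w⟩, ⟨w', y'⟩⟩, hmem, heq⟩
    obtain ⟨hprod, hker⟩ := Submodule.mem_inf.mp hmem
    obtain ⟨hp, hq⟩ := Submodule.mem_prod.mp hprod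
    have hker' : w = w' := by
      have := LinearMap.mem_ker.mp hker
      simpa [Gmap, sub_eq_zero] using this
    have heq' : v' = v ∧ y' = y := by
      simpa [Fmap, Prod.ext_iff] using heq
    obtain ⟨rfl, rfl⟩ := heq'
    exact ⟨w, hp, by rw [hker']; exact hq⟩

lemma Fmap_inj (hPH : ∀ p ∈ P, p ≠ 0 → 0 < (Hmn p p).re)
    (hQH : ∀ p ∈ Q, p ≠ 0 → 0 < (Hmn p p).re) :
    Function.Injective ((Fmap m n k).domRestrict (Tsub P Q)) := by
  have h0 : ∀ x : ↥(Tsub P Q), ((Fmap m n k).domRestrict (Tsub P Q)) x = 0 → x = 0 := by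
    rintro ⟨⟨⟨v, w⟩, ⟨w', y⟩⟩, hmem⟩ hx
    obtain ⟨hprod, hker⟩ := Submodule.mem_inf.mp hmem
    obtain ⟨hp, hq⟩ := Submodule.mem_prod.mp hprod
    have hmid : w = w' := by
      have := LinearMap.mem_ker.mp hker
      simpa [Gmap, sub_eq_zero] using this
    have hout : v = 0 ∧ y = 0 := by
      simpa [Fmap, LinearMap.domRestrict_apply, Prod.ext_iff] using hx
    obtain ⟨rfl, rfl⟩ := hout
    have hw0 : w = 0 := by
      by_contra hwne
      have hpne : ((0 : Vsp m), w) ≠ (0 : Vsp m × Vsp n) := by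
        intro hc; exact hwne (congrArg Prod.snd hc)
      have hqne : (w', (0 : Vsp k)) ≠ (0 : Vsp n × Vsp k) := by
        rw [← hmid]
        intro hc; exact hwne (congrArg Prod.fst hc)
      have h1 := hPH _ hp hpne
      have h2 := hQH _ hq hqne
      rw [← hmid] at h2
      simp only [Hmn, Hf_zero] at h1 h2
      simp only [zero_sub, sub_zero, Complex.neg_re] at h1 h2
      linarith
    have hw' : w' = 0 := hmid.symm.trans hw0
    apply Subtype.ext
    show ((((0 : Vsp m), w), (w', (0 : Vsp k))) : (Vsp m × Vsp n) × (Vsp n × Vsp k)) = 0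
    rw [hw0, hw']
    rfl
  intro x y hxy
  have hsub := h0 (x - y) (by
    have h1 := ((Fmap m n k).domRestrict (Tsub P Q)).map_sub x y
    rw [h1, hxy, sub_self])
  exact sub_eq_zero.mp hsub

/-- The product of two submodules is equivalent to their product type. -/
def prodSubEquiv : ↥(P.prod Q) ≃ₗ[ℂ] ↥P × ↥Q where
  toFun x := (⟨x.1.1, x.2.1⟩, ⟨x.1.2, x.2.2⟩)
  invFun y := ⟨(y.1.1, y.2.1), ⟨y.1.2, y.2.2⟩⟩
  map_add' x y := rfl
  map_smul' c x := rfl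
  left_inv x := rfl
  right_inv y := rfl

lemma finrank_prodSub (hPd : Module.finrank ℂ P = m + n)
    (hQd : Module.finrank ℂ Q = n + k) :
    Module.finrank ℂ (P.prod Q) = (m + n) + (n + k) := by
  haveI h1 : FiniteDimensional ℂ ↥P := inferInstance
  haveI h2 : FiniteDimensional ℂ ↥Q := inferInstance
  rw [(prodSubEquiv P Q).finrank_eq, Module.finrank_prod, hPd, hQd]

lemma finrank_Tsub_ge (hPd : Module.finrank ℂ P = m + n)
    (hQd : Module.finrank ℂ Q = n + k) :
    m + k ≤ Module.finrank ℂ (Tsub P Q) := by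
  have hrn := LinearMap.finrank_range_add_finrank_ker (Gmap m n k)
  have hsup := Submodule.finrank_sup_add_finrank_inf_eq (P.prod Q) (LinearMap.ker (Gmap m n k))
  have hPQ := finrank_prodSub P Q hPd hQd
  have hA : Module.finrank ℂ ((Vsp m × Vsp n) × (Vsp n × Vsp k))
      = ((m + m) + (n + n)) + ((n + n) + (k + k)) := by
    simp [Module.finrank_prod, Module.finrank_pi]
  have hsuple : Module.finrank ℂ ↥(P.prod Q ⊔ LinearMap.ker (Gmap m n k))
      ≤ ((m + m) + (n + n)) + ((n + n) + (k + k)) := by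
    rw [← hA]; exact Submodule.finrank_le _
  have hrle : Module.finrank ℂ (LinearMap.range (Gmap m n k)) ≤ n + n := by
    have h5 := Submodule.finrank_le (LinearMap.range (Gmap m n k))
    simpa [Module.finrank_prod, Module.finrank_pi] using h5
  rw [hA] at hrn
  have hT : Module.finrank ℂ ↥(P.prod Q ⊓ LinearMap.ker (Gmap m n k))
      = Module.finrank ℂ (Tsub P Q) := rfl
  omega

lemma finrank_relComp_eq_Tsub (hPH : ∀ p ∈ P, p ≠ 0 → 0 < (Hmn p p).re)
    (hQH : ∀ p ∈ Q, p ≠ 0 → 0 < (Hmn p p).re) :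
    Module.finrank ℂ (relComp P Q) = Module.finrank ℂ (Tsub P Q) := by
  have e1 : Module.finrank ℂ (relComp P Q)
      = Module.finrank ℂ (LinearMap.range ((Fmap m n k).domRestrict (Tsub P Q))) :=
    congrArg (fun S : Submodule ℂ (Vsp m × Vsp k) => Module.finrank ℂ S)
      ((relComp_eq_map P Q).trans (LinearMap.range_domRestrict (Tsub P Q) (Fmap m n k)).symm)
  rw [e1]
  exact LinearMap.finrank_range_of_inj (Fmap_inj P Q hPH hQH)

lemma phimap_inj : Function.Injective (phimap m k) := by
  intro x y hxy
  have h1 : x.1 = y.1 := congrArg (fun z => z.1.1) hxy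
  have h2 : x.2 = y.2 := congrArg (fun z => z.2.1) hxy
  exact Prod.ext h1 h2

lemma finrank_relComp_le
    (hpos : ∀ p ∈ relComp P Q, p ≠ 0 → 0 < (Hmn p p).re) :
    Module.finrank ℂ (relComp P Q) ≤ m + k := by
  have hNdim : Module.finrank ℂ (LinearMap.range (phimap m k)) = m + k := by
    rw [LinearMap.finrank_range_of_inj (phimap_inj (m := m) (k := k)), Module.finrank_prod,
      Module.finrank_pi, Module.finrank_pi, Fintype.card_fin, Fintype.card_fin]
  have hdisj : Disjoint (relComp P Q) (LinearMap.range (phimap m k)) := by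
    rw [Submodule.disjoint_def]
    intro x hx hN
    by_contra hne
    have hgt := hpos x hx hne
    obtain ⟨⟨a, b⟩, rfl⟩ := hN
    have hle : (Hmn (phimap m k (a, b)) (phimap m k (a, b))).re ≤ 0 := by
      have hval : phimap m k (a, b)
          = ((a, fun j => Complex.I * a j), (b, fun j => -Complex.I * b j)) := rfl
      rw [hval]
      simp only [Hmn, Complex.sub_re]
      rw [Hf_I_self, Hf_negI_self]
      have sa : 0 ≤ ∑ j, Complex.normSq (a j) :=
        Finset.sum_nonneg fun j _ => Complex.normSq_nonneg _
      have sb : 0 ≤ ∑ j, Complex.normSq (b j) :=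
        Finset.sum_nonneg fun j _ => Complex.normSq_nonneg _
      linarith
    linarith
  have hsum := Submodule.finrank_add_finrank_le_of_disjoint hdisj
  have htot : Module.finrank ℂ (Vsp m × Vsp k) = (m + m) + (k + k) := by
    simp [Module.finrank_prod, Module.finrank_pi]
  rw [htot, hNdim] at hsum
  omega

end DimLemmas

set_option synthInstance.maxHeartbeats 1000000 in
set_option maxHeartbeats 1000000 in
/-- the product of morphisms is a morphism. -/
theorem relComp_isMorphism (m n k : ℕ)
    (P : Submodule ℂ (Vsp m × Vsp n)) (Q : Submodule ℂ (Vsp n × Vsp k))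
    (hP : IsMorphism P) (hQ : IsMorphism Q) :
    IsMorphism (relComp P Q) := by
  obtain ⟨hPd, hPL, hPH⟩ := hP
  obtain ⟨hQd, hQL, hQH⟩ := hQ
  -- positivity on the composition
  have hpos : ∀ p ∈ relComp P Q, p ≠ 0 → 0 < (Hmn p p).re := by
    rintro ⟨v, y⟩ ⟨w, h1, h2⟩ hne
    have hsplit := Hmn_split v v w w y y
    have hnz : (v, w) ≠ (0 : Vsp m × Vsp n) ∨ (w, y) ≠ (0 : Vsp n × Vsp k) := by
      by_contra hc
      push_neg at hc
      obtain ⟨hc1, hc2⟩ := hc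
      apply hne
      rw [Prod.ext_iff] at hc1 hc2 ⊢
      exact ⟨hc1.1, hc2.2⟩
    have e1 : 0 ≤ (Hmn (v, w) (v, w)).re := by
      rcases eq_or_ne ((v, w) : Vsp m × Vsp n) 0 with h | h
      · rw [h]; simp [Hmn, Hf_zero]
      · exact le_of_lt (hPH _ h1 h)
    have e2 : 0 ≤ (Hmn (w, y) (w, y)).re := by
      rcases eq_or_ne ((w, y) : Vsp n × Vsp k) 0 with h | h
      · rw [h]; simp [Hmn, Hf_zero]
      · exact le_of_lt (hQH _ h2 h)
    have e3 : 0 < (Hmn (v, w) (v, w)).re ∨ 0 < (Hmn (w, y) (w, y)).re := by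
      rcases hnz with h | h
      · exact Or.inl (hPH _ h1 h)
      · exact Or.inr (hQH _ h2 h)
    rw [hsplit, Complex.add_re]
    rcases e3 with h | h <;> linarith
  refine ⟨?_, ?_, hpos⟩
  · -- dimension
    have hge := finrank_Tsub_ge P Q hPd hQd
    have hle := finrank_relComp_le P Q hpos
    have heq := finrank_relComp_eq_Tsub P Q hPH hQH
    omega
  · -- Lagrangian
    rintro ⟨v, y⟩ ⟨w, h1, h2⟩ ⟨v', y'⟩ ⟨w', h1', h2'⟩
    rw [Lmn_split v v' w w' y y', hPL _ h1 _ h1', hQL _ h2 _ h2', add_zero]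
end
end

section
/- Let P be a morphism V_m ⇉ V_n with Potapov transform S(P) = [[A, B],[Bᵗ, C]] and Q be a morphism V_k ⇉ V_m with Potapov transform S(Q) = [[K, L],[Lᵗ, M]]. Then C + K is invertible and the Potapov transform of the product PQ : V_k ⇉ V_n is S(PQ) = [[A − B(C+K)⁻¹Bᵗ, −B(C+K)⁻¹L],[−Lᵗ(C+K)⁻¹Bᵗ, M − Lᵗ(C+K)⁻¹L]]. -/
open Matrix

noncomputable section

/-- The solution set of the Potapov system of linear equations attached to a
symmetric `(n+m)×(n+m)` matrix `S = [[A,B],[Bᵗ,C]]`: the set of pairs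
`((w⁺,w⁻),(v⁺,v⁻)) ∈ V_m ⊕ V_n` with `−v⁺ = A v⁻ + B w⁻`, `w⁺ = Bᵗ v⁻ + C w⁻`. -/
def potapovSet {m n : ℕ} (S : Matrix (Fin n ⊕ Fin m) (Fin n ⊕ Fin m) ℂ) :
    Set (Vsp m × Vsp n) :=
  {p | -p.2.1 = S.toBlocks₁₁.mulVec p.2.2 + S.toBlocks₁₂.mulVec p.1.2 ∧
       p.1.1 = S.toBlocks₂₁.mulVec p.2.2 + S.toBlocks₂₂.mulVec p.1.2}

/-!
Eliminating the middle variable `w = (w⁺, w⁻)` from the equations of `P` and `Q` leaves the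
single constraint `(C + K) w⁻ = -(Bᵗ v⁻ + L u⁻)`, and substituting its solution into the two
remaining equations gives the Schur-complement formula. `C + K` is invertible because it is
symmetric with negative definite real part: if `(C + K) x = 0` with `x = a + i b`, `a, b` real,
then symmetry gives `0 = x̄ᵗ (C + K) x = aᵗ (C + K) a + bᵗ (C + K) b`, whose real part is
negative unless `x = 0`.
-/

namespace Matrix

theorem PosDef.toBlocks₁₁ {m n R : Type*} [Ring R] [PartialOrder R] [StarRing R]
    {M : Matrix (m ⊕ n) (m ⊕ n) R} (hM : M.PosDef) : M.toBlocks₁₁.PosDef :=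
  hM.submatrix Sum.inl_injective

theorem PosDef.toBlocks₂₂ {m n R : Type*} [Ring R] [PartialOrder R] [StarRing R]
    {M : Matrix (m ⊕ n) (m ⊕ n) R} (hM : M.PosDef) : M.toBlocks₂₂.PosDef :=
  hM.submatrix Sum.inr_injective

theorem mulVec_eq_iff_eq_nonsing_inv_mulVec {ι R : Type*} [Fintype ι] [DecidableEq ι] [CommRing R]
    {N : Matrix ι ι R} (hN : IsUnit N) {t r : ι → R} : N *ᵥ t = r ↔ t = N⁻¹ *ᵥ r := by
  have hdet := (isUnit_iff_isUnit_det N).mp hN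
  constructor
  · rintro rfl
    rw [mulVec_mulVec, nonsing_inv_mul N hdet, one_mulVec]
  · rintro rfl
    rw [mulVec_mulVec, mul_nonsing_inv N hdet, one_mulVec]

section ComplexSymmetric

variable {ι : Type*} [Fintype ι]

theorem re_dotProduct_mulVec_ofReal (Z : Matrix ι ι ℂ) (a : ι → ℝ) :
    ((Complex.ofReal ∘ a) ⬝ᵥ Z *ᵥ (Complex.ofReal ∘ a)).re = a ⬝ᵥ Z.map Complex.re *ᵥ a := by
  simp [dotProduct, mulVec, Finset.mul_sum, Complex.re_sum, Complex.mul_re]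

theorem star_dotProduct_mulVec_of_transpose_eq {Z : Matrix ι ι ℂ} (hZ : Zᵀ = Z) (x : ι → ℂ) :
    star x ⬝ᵥ Z *ᵥ x =
      (Complex.ofReal ∘ Complex.re ∘ x) ⬝ᵥ Z *ᵥ (Complex.ofReal ∘ Complex.re ∘ x) +
      (Complex.ofReal ∘ Complex.im ∘ x) ⬝ᵥ Z *ᵥ (Complex.ofReal ∘ Complex.im ∘ x) := by
  set a := Complex.ofReal ∘ Complex.re ∘ x
  set b := Complex.ofReal ∘ Complex.im ∘ x
  have hx : x = a + Complex.I • b := by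
    funext i; simpa [a, b, mul_comm] using (Complex.re_add_im (x i)).symm
  have hstar : star x = a - Complex.I • b := by
    funext i; simp [a, b, Complex.ext_iff]
  have hab : a ⬝ᵥ Z *ᵥ b = b ⬝ᵥ Z *ᵥ a := by
    rw [dotProduct_mulVec, ← mulVec_transpose, hZ, dotProduct_comm]
  rw [hstar, hx, mulVec_add, mulVec_smul, sub_dotProduct, dotProduct_add, dotProduct_add,
    smul_dotProduct, dotProduct_smul, smul_dotProduct, dotProduct_smul, hab]
  simp only [smul_eq_mul]
  linear_combination (-(b ⬝ᵥ Z *ᵥ b)) * Complex.I_mul_I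

variable [DecidableEq ι]

theorem isUnit_of_transpose_eq_of_posDef_neg_re {Z : Matrix ι ι ℂ} (hZ : Zᵀ = Z)
    (hneg : (-(Z.map Complex.re)).PosDef) : IsUnit Z := by
  rw [isUnit_iff_isUnit_det, isUnit_iff_ne_zero]
  intro hdet
  obtain ⟨x, hx, hZx⟩ := exists_mulVec_eq_zero_iff.mpr hdet
  have key := congrArg Complex.re (star_dotProduct_mulVec_of_transpose_eq hZ x)
  rw [hZx, dotProduct_zero, Complex.add_re, re_dotProduct_mulVec_ofReal,
    re_dotProduct_mulVec_ofReal, Complex.zero_re] at key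
  have hnonpos (y : ι → ℝ) : y ⬝ᵥ Z.map Complex.re *ᵥ y ≤ 0 := by
    simpa [neg_mulVec] using hneg.posSemidef.dotProduct_mulVec_nonneg y
  have eq_zero_of_nonneg (y : ι → ℝ) (hy : 0 ≤ y ⬝ᵥ Z.map Complex.re *ᵥ y) : y = 0 := by
    by_contra h
    exact hy.not_gt (by simpa [neg_mulVec] using hneg.dotProduct_mulVec_pos h)
  have hre := eq_zero_of_nonneg (Complex.re ∘ x) (by linarith [hnonpos (Complex.im ∘ x)])
  have him := eq_zero_of_nonneg (Complex.im ∘ x) (by linarith [hnonpos (Complex.re ∘ x)])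
  exact hx (funext fun i => Complex.ext (congrFun hre i) (congrFun him i))

end ComplexSymmetric

end Matrix

theorem mem_relComp {α β γ : Type*} [AddCommGroup α] [Module ℂ α] [AddCommGroup β] [Module ℂ β]
    [AddCommGroup γ] [Module ℂ γ] {P : Submodule ℂ (α × β)} {Q : Submodule ℂ (β × γ)}
    {x : α × γ} : x ∈ relComp P Q ↔ ∃ w, (x.1, w) ∈ P ∧ (w, x.2) ∈ Q :=
  Iff.rfl

section Potapov

variable {m n k : ℕ} {A : Matrix (Fin n) (Fin n) ℂ} {B : Matrix (Fin n) (Fin m) ℂ}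
  {B' : Matrix (Fin m) (Fin n) ℂ} {C K : Matrix (Fin m) (Fin m) ℂ}
  {L : Matrix (Fin m) (Fin k) ℂ} {L' : Matrix (Fin k) (Fin m) ℂ} {M : Matrix (Fin k) (Fin k) ℂ}

theorem mem_potapovSet_fromBlocks {p : Vsp m × Vsp n} :
    p ∈ potapovSet (fromBlocks A B B' C) ↔
      -p.2.1 = A *ᵥ p.2.2 + B *ᵥ p.1.2 ∧ p.1.1 = B' *ᵥ p.2.2 + C *ᵥ p.1.2 :=
  Iff.rfl

theorem exists_mem_potapovSet_and_mem_potapovSet_iff (u : Vsp k) (v : Vsp n) :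
    (∃ w, (u, w) ∈ potapovSet (fromBlocks K L L' M) ∧ (w, v) ∈ potapovSet (fromBlocks A B B' C)) ↔
      ∃ t, (C + K) *ᵥ t = -(B' *ᵥ v.2 + L *ᵥ u.2) ∧
        -v.1 = A *ᵥ v.2 + B *ᵥ t ∧ u.1 = L' *ᵥ t + M *ᵥ u.2 := by
  simp only [mem_potapovSet_fromBlocks]
  constructor
  · rintro ⟨⟨w₁, t⟩, ⟨hQ₁, hQ₂⟩, hP₁, hP₂⟩
    dsimp only at *
    subst hP₂
    exact ⟨t, by rw [add_mulVec]; linear_combination -hQ₁, hP₁, hQ₂⟩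
  · rintro ⟨t, ht, hP₁, hQ₂⟩
    refine ⟨(B' *ᵥ v.2 + C *ᵥ t, t), ⟨?_, hQ₂⟩, hP₁, rfl⟩
    rw [add_mulVec] at ht
    linear_combination -ht

theorem coe_relComp_eq_potapovSet {P : Submodule ℂ (Vsp m × Vsp n)}
    {Q : Submodule ℂ (Vsp k × Vsp m)} (hCK : IsUnit (C + K))
    (hP : (P : Set (Vsp m × Vsp n)) = potapovSet (fromBlocks A B B' C))
    (hQ : (Q : Set (Vsp k × Vsp m)) = potapovSet (fromBlocks K L L' M)) :
    ((relComp Q P : Submodule ℂ (Vsp k × Vsp n)) : Set (Vsp k × Vsp n)) =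
      potapovSet (fromBlocks
        (A - B * (C + K)⁻¹ * B') (-(B * (C + K)⁻¹ * L))
        (-(L' * (C + K)⁻¹ * B')) (M - L' * (C + K)⁻¹ * L)) := by
  ext ⟨u, v⟩
  rw [SetLike.mem_coe, mem_relComp]
  simp only [← SetLike.mem_coe, hP, hQ]
  rw [exists_mem_potapovSet_and_mem_potapovSet_iff]
  simp only [mulVec_eq_iff_eq_nonsing_inv_mulVec hCK, exists_eq_left, mem_potapovSet_fromBlocks,
    mulVec_add, mulVec_neg, sub_mulVec, neg_mulVec, mulVec_mulVec, Matrix.mul_assoc]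
  exact and_congr (Eq.congr_right (by abel)) (Eq.congr_right (by abel))

end Potapov

theorem potapov_of_relComp_general (m n k : ℕ)
    (P : Submodule ℂ (Vsp m × Vsp n)) (Q : Submodule ℂ (Vsp k × Vsp m))
    (A : Matrix (Fin n) (Fin n) ℂ) (B : Matrix (Fin n) (Fin m) ℂ)
    (C : Matrix (Fin m) (Fin m) ℂ)
    (K : Matrix (Fin m) (Fin m) ℂ) (L : Matrix (Fin m) (Fin k) ℂ)
    (M : Matrix (Fin k) (Fin k) ℂ)
    (hSP_symm : (Matrix.fromBlocks A B Bᵀ C)ᵀ = Matrix.fromBlocks A B Bᵀ C)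
    (hSP_neg : (-((Matrix.fromBlocks A B Bᵀ C).map Complex.re)).PosDef)
    (hSP : (P : Set (Vsp m × Vsp n)) = potapovSet (Matrix.fromBlocks A B Bᵀ C))
    (hSQ_symm : (Matrix.fromBlocks K L Lᵀ M)ᵀ = Matrix.fromBlocks K L Lᵀ M)
    (hSQ_neg : (-((Matrix.fromBlocks K L Lᵀ M).map Complex.re)).PosDef)
    (hSQ : (Q : Set (Vsp k × Vsp m)) = potapovSet (Matrix.fromBlocks K L Lᵀ M)) :
    IsUnit (C + K) ∧
    ((relComp Q P : Submodule ℂ (Vsp k × Vsp n)) : Set (Vsp k × Vsp n)) =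
      potapovSet (Matrix.fromBlocks
        (A - B * (C + K)⁻¹ * Bᵀ) (-(B * (C + K)⁻¹ * L))
        (-(Lᵀ * (C + K)⁻¹ * Bᵀ)) (M - Lᵀ * (C + K)⁻¹ * L)) := by
  have hC_symm : Cᵀ = C := by
    simpa [fromBlocks_transpose] using congrArg toBlocks₂₂ hSP_symm
  have hK_symm : Kᵀ = K := by
    simpa [fromBlocks_transpose] using congrArg toBlocks₁₁ hSQ_symm
  have hC_neg : (-(C.map Complex.re)).PosDef := by
    simpa [fromBlocks_map, fromBlocks_neg] using hSP_neg.toBlocks₂₂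
  have hK_neg : (-(K.map Complex.re)).PosDef := by
    simpa [fromBlocks_map, fromBlocks_neg] using hSQ_neg.toBlocks₁₁
  have hCK : IsUnit (C + K) := by
    refine isUnit_of_transpose_eq_of_posDef_neg_re (by rw [transpose_add, hC_symm, hK_symm]) ?_
    rw [Matrix.map_add _ Complex.add_re, neg_add]
    exact hC_neg.add hK_neg
  exact ⟨hCK, coe_relComp_eq_potapovSet hCK hSP hSQ⟩

/-- composition of morphisms in Potapov coordinates.
If `S(P) = [[A,B],[Bᵗ,C]]` (for `P : V_m ⇉ V_n`) and `S(Q) = [[K,L],[Lᵗ,M]]`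
(for `Q : V_k ⇉ V_m`), then `C + K` is invertible and
`S(PQ) = [[A − B(C+K)⁻¹Bᵗ, −B(C+K)⁻¹L],[−Lᵗ(C+K)⁻¹Bᵗ, M − Lᵗ(C+K)⁻¹L]]`. -/
theorem potapov_of_relComp (m n k : ℕ)
    (P : Submodule ℂ (Vsp m × Vsp n)) (Q : Submodule ℂ (Vsp k × Vsp m))
    (hP : IsMorphism P) (hQ : IsMorphism Q)
    (A : Matrix (Fin n) (Fin n) ℂ) (B : Matrix (Fin n) (Fin m) ℂ)
    (C : Matrix (Fin m) (Fin m) ℂ)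
    (K : Matrix (Fin m) (Fin m) ℂ) (L : Matrix (Fin m) (Fin k) ℂ)
    (M : Matrix (Fin k) (Fin k) ℂ)
    (hSP_symm : (Matrix.fromBlocks A B Bᵀ C)ᵀ = Matrix.fromBlocks A B Bᵀ C)
    (hSP_neg : (-((Matrix.fromBlocks A B Bᵀ C).map Complex.re)).PosDef)
    (hSP : (P : Set (Vsp m × Vsp n)) = potapovSet (Matrix.fromBlocks A B Bᵀ C))
    (hSQ_symm : (Matrix.fromBlocks K L Lᵀ M)ᵀ = Matrix.fromBlocks K L Lᵀ M)
    (hSQ_neg : (-((Matrix.fromBlocks K L Lᵀ M).map Complex.re)).PosDef)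
    (hSQ : (Q : Set (Vsp k × Vsp m)) = potapovSet (Matrix.fromBlocks K L Lᵀ M)) :
    IsUnit (C + K) ∧
    ((relComp Q P : Submodule ℂ (Vsp k × Vsp n)) : Set (Vsp k × Vsp n)) =
      potapovSet (Matrix.fromBlocks
        (A - B * (C + K)⁻¹ * Bᵀ) (-(B * (C + K)⁻¹ * L))
        (-(Lᵀ * (C + K)⁻¹ * Bᵀ)) (M - Lᵀ * (C + K)⁻¹ * L)) :=
  potapov_of_relComp_general m n k P Q A B C K L M hSP_symm hSP_neg hSP hSQ_symm hSQ_neg hSQ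
end
end

section
/- Let S = [[A, B],[Bᵗ, C]] be a symmetric (m+n)×(m+n) complex matrix (A of size m×m, C of size n×n) and let K(x, y) = exp{½ (xᵗ, yᵗ) S (x, y)ᵗ} for x ∈ ℝᵐ, y ∈ ℝⁿ. Let α⁺, α⁻ ∈ ℂᵐ and β⁺, β⁻ ∈ ℂⁿ. Then the identity Σ_{j=1}^m (α⁺_j x_j + α⁻_j ∂/∂x_j) K(x,y) = Σ_{k=1}^n (β⁺_k y_k − β⁻_k ∂/∂y_k) K(x,y) holds for all x ∈ ℝᵐ, y ∈ ℝⁿ if and only if α⁺ = −A α⁻ − B β⁻ and β⁺ = Bᵗ α⁻ + C β⁻. -/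
/-!
Differentiating `K = exp (½ qf S)` and using the symmetry of `S` gives `∂K/∂x_j = K · (S v)_j`
and `∂K/∂y_k = K · (S v)_{m+k}` with `v = (x, y)`, that is `K · (A x + B y)_j` and
`K · (Bᵀ x + C y)_k`. Dividing by `K ≠ 0` turns the identity into a linear one in `(x, y)`.
Moving the matrices across the dot products (using `Aᵀ = A`, `Cᵀ = C`), it says that
`α⁺ + A α⁻ + B β⁻` and `Bᵀ α⁻ + C β⁻ - β⁺` pair to zero with every real `x` and `y`, so both vanish.
-/

open Matrix Real

noncomputable section

/-- Complexification of a real vector. -/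
def cv {ι : Type*} (x : ι → ℝ) : ι → ℂ := fun i => (x i : ℂ)

/-- The value `(xᵗ, yᵗ) S (x, y)ᵗ` of the quadratic form of a complex
`(m+n)×(m+n)` matrix `S` on the concatenated real vector `(x, y)`. -/
def qf {m n : ℕ} (S : Matrix (Fin m ⊕ Fin n) (Fin m ⊕ Fin n) ℂ)
    (x : Fin m → ℝ) (y : Fin n → ℝ) : ℂ :=
  dotProduct (cv (Sum.elim x y)) (S.mulVec (cv (Sum.elim x y)))

theorem HasFDerivAt.dotProduct {ι 𝕜 𝔸 E : Type*} [Fintype ι] [NontriviallyNormedField 𝕜]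
    [NormedCommRing 𝔸] [NormedAlgebra 𝕜 𝔸] [NormedAddCommGroup E] [NormedSpace 𝕜 E]
    {f g : E → ι → 𝔸} {f' g' : E →L[𝕜] ι → 𝔸} {x : E}
    (hf : HasFDerivAt f f' x) (hg : HasFDerivAt g g' x) :
    HasFDerivAt (fun x => f x ⬝ᵥ g x)
      (∑ i, (f x i • (ContinuousLinearMap.proj i).comp g'
        + g x i • (ContinuousLinearMap.proj i).comp f')) x :=
  HasFDerivAt.fun_sum fun i _ => (hasFDerivAt_pi'.1 hf i).mul (hasFDerivAt_pi'.1 hg i)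

section SumElim

variable {𝕜 α β F : Type*} [NontriviallyNormedField 𝕜] [Fintype α] [Fintype β]
  [NormedAddCommGroup F] [NormedSpace 𝕜 F]

theorem fderiv_comp_sumElim_left {G : (α ⊕ β → 𝕜) → F} {x : α → 𝕜} {y : β → 𝕜}
    (hG : DifferentiableAt 𝕜 G (Sum.elim x y)) (h : α → 𝕜) :
    fderiv 𝕜 (fun x' => G (Sum.elim x' y)) x h = fderiv 𝕜 G (Sum.elim x y) (Sum.elim h 0) := by
  have hinc : HasFDerivAt (fun x' => Sum.elim x' y)
      (ContinuousLinearMap.pi (Sum.elim ContinuousLinearMap.proj 0) : (α → 𝕜) →L[𝕜] α ⊕ β → 𝕜) x :=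
    hasFDerivAt_pi.2 fun
      | .inl j => hasFDerivAt_apply j x
      | .inr _ => hasFDerivAt_const _ x
  rw [fderiv_fun_comp x hG hinc.differentiableAt, ContinuousLinearMap.comp_apply, hinc.fderiv]
  congr 1
  ext (i | i) <;> rfl

theorem fderiv_comp_sumElim_right {G : (α ⊕ β → 𝕜) → F} {x : α → 𝕜} {y : β → 𝕜}
    (hG : DifferentiableAt 𝕜 G (Sum.elim x y)) (h : β → 𝕜) :
    fderiv 𝕜 (fun y' => G (Sum.elim x y')) y h = fderiv 𝕜 G (Sum.elim x y) (Sum.elim 0 h) := by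
  have hinc : HasFDerivAt (fun y' => Sum.elim x y')
      (ContinuousLinearMap.pi (Sum.elim 0 ContinuousLinearMap.proj) : (β → 𝕜) →L[𝕜] α ⊕ β → 𝕜) y :=
    hasFDerivAt_pi.2 fun
      | .inl _ => hasFDerivAt_const _ y
      | .inr k => hasFDerivAt_apply k y
  rw [fderiv_fun_comp y hG hinc.differentiableAt, ContinuousLinearMap.comp_apply, hinc.fderiv]
  congr 1
  ext (i | i) <;> rfl

end SumElim

theorem cv_zero {ι : Type*} : cv (0 : ι → ℝ) = 0 := by
  ext; simp [cv]

theorem cv_single {ι : Type*} [DecidableEq ι] (i : ι) (a : ℝ) :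
    cv (Pi.single i a) = Pi.single i (a : ℂ) := by
  ext j; by_cases h : j = i <;> simp [cv, h]

section Gaussian

variable {ι : Type*} [Fintype ι]

def ofRealPiCLM : (ι → ℝ) →L[ℝ] (ι → ℂ) :=
  ContinuousLinearMap.pi fun i => Complex.ofRealCLM.comp (ContinuousLinearMap.proj i)

theorem fderiv_quadForm_apply (S : Matrix ι ι ℂ) (z v : ι → ℝ) :
    fderiv ℝ (fun z => cv z ⬝ᵥ S *ᵥ cv z) z v = cv z ⬝ᵥ S *ᵥ cv v + (S *ᵥ cv z) ⬝ᵥ cv v := by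
  have hcv : HasFDerivAt cv ofRealPiCLM z := ofRealPiCLM.hasFDerivAt
  have hSv : HasFDerivAt (fun z => S *ᵥ cv z)
      (((S.mulVecLin.restrictScalars ℝ).toContinuousLinearMap).comp ofRealPiCLM) z :=
    (((S.mulVecLin.restrictScalars ℝ).toContinuousLinearMap).comp ofRealPiCLM).hasFDerivAt
  rw [(hcv.dotProduct hSv).fderiv]
  simp only [ofRealPiCLM, ContinuousLinearMap.proj_pi, Finset.sum_add_distrib, _root_.add_apply,
    _root_.sum_apply, _root_.smul_apply, ContinuousLinearMap.comp_apply,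
    ContinuousLinearMap.coe_pi', ContinuousLinearMap.proj_apply, Complex.ofRealCLM_apply,
    LinearMap.coe_toContinuousLinearMap', LinearMap.coe_restrictScalars, mulVecBilin_apply,
    smul_eq_mul, dotProduct]
  rfl

theorem differentiable_quadForm (S : Matrix ι ι ℂ) :
    Differentiable ℝ (fun z : ι → ℝ => cv z ⬝ᵥ S *ᵥ cv z) := by
  simp only [cv, dotProduct, mulVec]
  fun_prop

def gaussian (S : Matrix ι ι ℂ) (z : ι → ℝ) : ℂ :=
  Complex.exp (1 / 2 * (cv z ⬝ᵥ S *ᵥ cv z))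

theorem hasFDerivAt_gaussian (S : Matrix ι ι ℂ) (z : ι → ℝ) :
    HasFDerivAt (gaussian S)
      (gaussian S z • (1 / 2 : ℂ) • fderiv ℝ (fun z => cv z ⬝ᵥ S *ᵥ cv z) z) z :=
  ((differentiable_quadForm S z).hasFDerivAt.const_mul _).cexp

theorem fderiv_gaussian_apply {S : Matrix ι ι ℂ} (hS : Sᵀ = S) (z v : ι → ℝ) :
    fderiv ℝ (gaussian S) z v = gaussian S z * ((S *ᵥ cv z) ⬝ᵥ cv v) := by
  have hsymm : cv z ⬝ᵥ S *ᵥ cv v = (S *ᵥ cv z) ⬝ᵥ cv v := by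
    rw [dotProduct_mulVec, ← mulVec_transpose, hS]
  rw [(hasFDerivAt_gaussian S z).fderiv]
  simp only [_root_.smul_apply, fderiv_quadForm_apply, hsymm, smul_eq_mul]
  ring

end Gaussian

theorem fderiv_exp_qf_left {m n : ℕ} {S : Matrix (Fin m ⊕ Fin n) (Fin m ⊕ Fin n) ℂ}
    (hS : Sᵀ = S) (x : Fin m → ℝ) (y : Fin n → ℝ) (j : Fin m) :
    fderiv ℝ (fun x' => Complex.exp ((1 / 2 : ℂ) * qf S x' y)) x (Pi.single j 1)
      = Complex.exp ((1 / 2 : ℂ) * qf S x y) * (S *ᵥ cv (Sum.elim x y)) (Sum.inl j) := by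
  change fderiv ℝ (fun x' => gaussian S (Sum.elim x' y)) x (Pi.single j 1)
    = gaussian S (Sum.elim x y) * _
  rw [fderiv_comp_sumElim_left (hasFDerivAt_gaussian S _).differentiableAt,
    fderiv_gaussian_apply hS, Sum.elim_single_zero, cv_single, Complex.ofReal_one,
    dotProduct_single_one]

theorem fderiv_exp_qf_right {m n : ℕ} {S : Matrix (Fin m ⊕ Fin n) (Fin m ⊕ Fin n) ℂ}
    (hS : Sᵀ = S) (x : Fin m → ℝ) (y : Fin n → ℝ) (k : Fin n) :
    fderiv ℝ (fun y' => Complex.exp ((1 / 2 : ℂ) * qf S x y')) y (Pi.single k 1)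
      = Complex.exp ((1 / 2 : ℂ) * qf S x y) * (S *ᵥ cv (Sum.elim x y)) (Sum.inr k) := by
  change fderiv ℝ (fun y' => gaussian S (Sum.elim x y')) y (Pi.single k 1)
    = gaussian S (Sum.elim x y) * _
  rw [fderiv_comp_sumElim_right (hasFDerivAt_gaussian S _).differentiableAt,
    fderiv_gaussian_apply hS, Sum.elim_zero_single, cv_single, Complex.ofReal_one,
    dotProduct_single_one]

theorem forall_dotProduct_cv_eq_zero_iff {ι : Type*} [Fintype ι] (u : ι → ℂ) :
    (∀ x : ι → ℝ, u ⬝ᵥ cv x = 0) ↔ u = 0 := by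
  classical
  refine ⟨fun h => funext fun i => ?_, fun h x => by rw [h, zero_dotProduct]⟩
  simpa [cv_single] using h (Pi.single i 1)

theorem forall_dotProduct_cv_add_eq_zero_iff {α β : Type*} [Fintype α] [Fintype β]
    (u : α → ℂ) (w : β → ℂ) :
    (∀ x y, u ⬝ᵥ cv x + w ⬝ᵥ cv y = 0) ↔ u = 0 ∧ w = 0 := by
  rw [← forall_dotProduct_cv_eq_zero_iff u, ← forall_dotProduct_cv_eq_zero_iff w]
  refine ⟨fun h => ⟨fun x => ?_, fun y => ?_⟩, fun ⟨hu, hw⟩ x y => by rw [hu, hw, add_zero]⟩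
  · simpa [cv_zero] using h x 0
  · simpa [cv_zero] using h 0 y

theorem forall_dotProduct_block_eq_iff {α β : Type*} [Fintype α] [Fintype β]
    {A : Matrix α α ℂ} {B : Matrix α β ℂ} {C : Matrix β β ℂ} (hA : Aᵀ = A) (hC : Cᵀ = C)
    (αp αm : α → ℂ) (βp βm : β → ℂ) :
    (∀ x y, αp ⬝ᵥ cv x + αm ⬝ᵥ (A *ᵥ cv x + B *ᵥ cv y)
        = βp ⬝ᵥ cv y - βm ⬝ᵥ (Bᵀ *ᵥ cv x + C *ᵥ cv y))
      ↔ αp = -(A *ᵥ αm) - B *ᵥ βm ∧ βp = Bᵀ *ᵥ αm + C *ᵥ βm := by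
  have hdiff : ∀ x y, αp ⬝ᵥ cv x + αm ⬝ᵥ (A *ᵥ cv x + B *ᵥ cv y)
      - (βp ⬝ᵥ cv y - βm ⬝ᵥ (Bᵀ *ᵥ cv x + C *ᵥ cv y))
      = (αp + A *ᵥ αm + B *ᵥ βm) ⬝ᵥ cv x + (Bᵀ *ᵥ αm + C *ᵥ βm - βp) ⬝ᵥ cv y := by
    intro x y
    simp only [dotProduct_add, add_dotProduct, sub_dotProduct, dotProduct_mulVec,
      ← mulVec_transpose, hA, hC, transpose_transpose]
    ring
  simp_rw [← sub_eq_zero (a := αp ⬝ᵥ _ + _), hdiff, forall_dotProduct_cv_add_eq_zero_iff,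
    add_assoc, add_eq_zero_iff_eq_neg, sub_eq_zero, neg_add', eq_comm (a := Bᵀ *ᵥ αm + _)]

/-- for `K(x,y) = exp{½ (xᵗ,yᵗ) S (x,y)ᵗ}` with `S = [[A,B],[Bᵗ,C]]`
symmetric, the identity
`Σ_j (α⁺_j x_j + α⁻_j ∂/∂x_j) K = Σ_k (β⁺_k y_k − β⁻_k ∂/∂y_k) K`
holds for all `x, y` iff `α⁺ = −Aα⁻ − Bβ⁻` and `β⁺ = Bᵗα⁻ + Cβ⁻`. -/
theorem gauss_kernel_diff_eq_iff (m n : ℕ)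
    (A : Matrix (Fin m) (Fin m) ℂ) (B : Matrix (Fin m) (Fin n) ℂ)
    (C : Matrix (Fin n) (Fin n) ℂ)
    (hA : Aᵀ = A) (hC : Cᵀ = C)
    (S : Matrix (Fin m ⊕ Fin n) (Fin m ⊕ Fin n) ℂ)
    (hS : S = Matrix.fromBlocks A B Bᵀ C)
    (αp αm : Fin m → ℂ) (βp βm : Fin n → ℂ) :
    (∀ (x : Fin m → ℝ) (y : Fin n → ℝ),
      (∑ j, (αp j * (x j : ℂ) * Complex.exp ((1 / 2 : ℂ) * qf S x y)
        + αm j * fderiv ℝ (fun x' => Complex.exp ((1 / 2 : ℂ) * qf S x' y)) x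
            (Pi.single j 1)))
      = ∑ k, (βp k * (y k : ℂ) * Complex.exp ((1 / 2 : ℂ) * qf S x y)
        - βm k * fderiv ℝ (fun y' => Complex.exp ((1 / 2 : ℂ) * qf S x y')) y
            (Pi.single k 1)))
    ↔ (αp = -(A.mulVec αm) - B.mulVec βm ∧ βp = Bᵀ.mulVec αm + C.mulVec βm) := by
  have hSsymm : Sᵀ = S := by rw [hS, fromBlocks_transpose, transpose_transpose, hA, hC]
  have hSv : ∀ x y, S *ᵥ cv (Sum.elim x y)
      = Sum.elim (A *ᵥ cv x + B *ᵥ cv y) (Bᵀ *ᵥ cv x + C *ᵥ cv y) := by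
    intro x y
    rw [hS, fromBlocks_mulVec]
    rfl
  rw [← forall_dotProduct_block_eq_iff hA hC]
  refine forall₂_congr fun x y => ?_
  -- both sides of the kernel identity are `K x y` times those of the linear one
  conv_rhs => rw [← mul_left_inj' (Complex.exp_ne_zero ((1 / 2 : ℂ) * qf S x y))]
  simp only [fderiv_exp_qf_left hSsymm, fderiv_exp_qf_right hSsymm, hSv, Sum.elim_inl,
    Sum.elim_inr, dotProduct, cv, Finset.sum_mul, add_mul, sub_mul, ← Finset.sum_add_distrib,
    ← Finset.sum_sub_distrib]
  refine Iff.of_eq (congrArg₂ _ ?_ ?_) <;> exact Finset.sum_congr rfl fun _ _ => by ring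
end
end

section
/- Let P be a morphism V_n ⇉ V_n, i.e. a complex subspace P ⊆ V_n ⊕ V_n of dimension 2n on which L_{n,n} vanishes identically and on which H_{n,n} is strictly positive definite. Then P is an idempotent for composition of linear relations (PP = P) if and only if P = Y ⊕ Z for some complex subspace Y of the first copy of V_n and some complex subspace Z of the second copy of V_n (i.e. P is the direct product of a subspace of the first summand and a subspace of the second summand). -/
open Matrix

noncomputable section

/-- a morphism `P : V_n ⇉ V_n` is an idempotent (`PP = P`) iff
`P = Y ⊕ Z` for subspaces `Y` of the first copy of `V_n` and `Z` of the second. -/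
theorem idempotent_iff_prod (n : ℕ) (P : Submodule ℂ (Vsp n × Vsp n))
    (hP : IsMorphism P) :
    relComp P P = P ↔ ∃ (Y Z : Submodule ℂ (Vsp n)), P = Y.prod Z := by
  obtain ⟨-, -, hpos⟩ := hP
  constructor
  · intro h
    refine ⟨P.comap (LinearMap.inl ℂ (Vsp n) (Vsp n)),
            P.comap (LinearMap.inr ℂ (Vsp n) (Vsp n)), ?_⟩
    ext ⟨v, w⟩
    simp only [Submodule.mem_prod, Submodule.mem_comap, LinearMap.coe_inl, LinearMap.coe_inr]
    constructor
    · intro hvw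
      have hvw' : (v, w) ∈ relComp P P := by rw [h]; exact hvw
      obtain ⟨u, h1, h2⟩ := hvw'
      -- (u, u) ∈ P
      have huu : ((u, u) : Vsp n × Vsp n) ∈ P := by
        have := P.add_mem (P.add_mem h1 h2) (P.neg_mem hvw)
        convert this using 1
        ext <;> simp
      have hu0 : (u : Vsp n) = 0 := by
        by_contra hne
        have hne' : ((u, u) : Vsp n × Vsp n) ≠ 0 := by
          simp [Prod.ext_iff, hne]
        have := hpos _ huu hne'
        simp [Hmn] at this
      rw [hu0] at h1 h2
      exact ⟨h1, h2⟩
    · rintro ⟨h1, h2⟩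
      have := P.add_mem h1 h2
      simpa using this
  · rintro ⟨Y, Z, rfl⟩
    ext ⟨v, w⟩
    constructor
    · rintro ⟨u, ⟨hv, hu⟩, ⟨hu', hw⟩⟩
      exact ⟨hv, hw⟩
    · rintro ⟨hv, hw⟩
      exact ⟨0, ⟨hv, Z.zero_mem⟩, ⟨Y.zero_mem, hw⟩⟩
end
end
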